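/- Correlation of consecutive probings under equal phase shifts, direct path subtracted (Lemma 3, EPS case). In the direct-path-subtracted model with samples t_p = star v ⬝ᵥ (Φ_p.mulVec u) + (n_p − n_d), suppose Φ_p(ω) = exp(I · φ_p(ω)) · (identity matrix), where φ₁, φ₂ are independent real random variables, each uniform on (−π, π), independent of (u, v, n₁, n₂, n_d). Assume (u, v, n₁, n₂, n_d) mutually independent, all (entrywise) zero-mean and square-integrable, E[|n₁|²] = E[|n₂|²] = σ², E[n₁ · conj(n₂)] = 0, E[|n_d|²] = σ_d². Then the correlation coefficient ρ = E[t₁ · conj(t₂)] / E[|t_l|²] equals σ_d² / (trace(R_v · R_u) + σ_d² + σ²). -/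

import Mathlib

/-!
Write `t_p = e^{iφ_p} s + m_p` with `s = vᴴu` and `m_p = n_p - n_d`. Since the phases are
independent of everything else, every second moment of the samples factorizes, and since a uniform
phase factor has mean zero, the cross terms `e^{iφ_p} s conj(m_q)` vanish. In the numerator the
signal term also vanishes, because `E[e^{iφ₀} conj(e^{iφ₁})] = E[e^{iφ₀}] E[conj(e^{iφ₁})] = 0`,
so only the common direct-path noise survives: `E[m₀ conj(m₁)] = E|n_d|² = σ_d²`. In the
denominator `|e^{iφ_l}| = 1` leaves `E|s|² + E|m_l|²`, where `E|s|² = tr(R_v R_u)` by independence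
of `u` and `v`.
-/

open MeasureTheory ProbabilityTheory Matrix Complex Real
open scoped ENNReal

section

variable {Ω : Type*} [MeasurableSpace Ω] {μ : Measure Ω}

section Independence

variable {α β : Type*} [MeasurableSpace α] [MeasurableSpace β] [IsProbabilityMeasure μ]
  {X : Ω → α} {Y : Ω → β} {ν : Measure β} [SFinite ν]

lemma map_snd_eq_of_map_prodMk_eq_map_prod (hX : Measurable X) (hY : Measurable Y)
    (h : μ.map (fun ω => (X ω, Y ω)) = (μ.map X).prod ν) : μ.map Y = ν := by
  have : IsProbabilityMeasure (μ.map X) := Measure.isProbabilityMeasure_map hX.aemeasurable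
  calc μ.map Y = (μ.map (fun ω => (X ω, Y ω))).map Prod.snd :=
        (Measure.map_map measurable_snd (hX.prodMk hY)).symm
    _ = ν := by rw [h, Measure.map_snd_prod, measure_univ, one_smul]

lemma indepFun_of_map_prodMk_eq_map_prod (hX : Measurable X) (hY : Measurable Y)
    (h : μ.map (fun ω => (X ω, Y ω)) = (μ.map X).prod ν) : X ⟂ᵢ[μ] Y := by
  rwa [indepFun_iff_map_prod_eq_prod_map_map hX.aemeasurable hY.aemeasurable,
    map_snd_eq_of_map_prodMk_eq_map_prod hX hY h]

lemma indepFun_of_map_eq_prod₅ {α₃ α₄ α₅ : Type*} [MeasurableSpace α₃] [MeasurableSpace α₄]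
    [MeasurableSpace α₅] {X₃ : Ω → α₃} {X₄ : Ω → α₄} {X₅ : Ω → α₅} (hX : Measurable X)
    (hY : Measurable Y) (hX₃ : Measurable X₃) (hX₄ : Measurable X₄) (hX₅ : Measurable X₅)
    (h : μ.map (fun ω => (X ω, Y ω, X₃ ω, X₄ ω, X₅ ω))
      = (μ.map X).prod ((μ.map Y).prod ((μ.map X₃).prod ((μ.map X₄).prod (μ.map X₅))))) :
    X ⟂ᵢ[μ] Y ∧ X₃ ⟂ᵢ[μ] X₅ ∧ X₄ ⟂ᵢ[μ] X₅ := by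
  have h₂ := map_snd_eq_of_map_prodMk_eq_map_prod hX (by fun_prop) h
  have h₃ := map_snd_eq_of_map_prodMk_eq_map_prod hY (by fun_prop) h₂
  have h₄ := map_snd_eq_of_map_prodMk_eq_map_prod hX₃ (by fun_prop) h₃
  exact ⟨(indepFun_of_map_prodMk_eq_map_prod hX (by fun_prop) h).comp measurable_id
      measurable_fst,
    (indepFun_of_map_prodMk_eq_map_prod hX₃ (by fun_prop) h₃).comp measurable_id measurable_snd,
    indepFun_of_map_prodMk_eq_map_prod hX₄ hX₅ h₄⟩

end Independence

lemma integral_exp_I_mul_uniform_Ioo :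
    ∫ x : ℝ, exp (I * x) ∂((ENNReal.ofReal (2 * π))⁻¹ • volume.restrict (Set.Ioo (-π) π)) = 0 := by
  rw [integral_smul_measure, ← integral_Ioc_eq_integral_Ioo,
    ← intervalIntegral.integral_of_le (by linarith [pi_pos]),
    integral_exp_mul_complex I_ne_zero]
  have : I * ((-π : ℝ) : ℂ) = -(π * I) := by push_cast; ring
  rw [this, mul_comm I, Complex.exp_neg, exp_pi_mul_I]
  norm_num

lemma integral_exp_I_mul_eq_zero_of_map_eq_uniform {ψ : Ω → ℝ} (hψ : AEMeasurable ψ μ)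
    (h : μ.map ψ = (ENNReal.ofReal (2 * π))⁻¹ • volume.restrict (Set.Ioo (-π) π)) :
    ∫ ω, exp (I * ψ ω) ∂μ = 0 := by
  rw [← integral_map (f := fun x : ℝ => exp (I * x)) hψ (by fun_prop), h,
    integral_exp_I_mul_uniform_Ioo]

lemma memLp_top_exp_I_mul {ψ : Ω → ℝ} (hψ : AEMeasurable ψ μ) :
    MemLp (fun ω => exp (I * ψ ω)) ∞ μ :=
  memLp_top_of_bound (by fun_prop) 1 (ae_of_all _ fun ω => (norm_exp_I_mul_ofReal _).le)

lemma exp_I_mul_ofReal_mul_star (x : ℝ) : exp (I * x) * star (exp (I * x)) = 1 := by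
  rw [← starRingEnd_apply, mul_conj, normSq_eq_norm_sq, mul_comm, norm_exp_ofReal_mul_I]
  norm_num

section SecondMoments

variable {𝕜 : Type*} [RCLike 𝕜]

lemma integral_star_eq_zero {f : Ω → 𝕜} (hf : ∫ ω, f ω ∂μ = 0) : ∫ ω, star (f ω) ∂μ = 0 := by
  simp only [← starRingEnd_apply, integral_conj, hf, map_zero]

lemma ProbabilityTheory.IndepFun.integral_mul_eq_zero {X Y : Ω → 𝕜} (hXY : X ⟂ᵢ[μ] Y)
    (hX : AEStronglyMeasurable X μ) (hY : AEStronglyMeasurable Y μ) (hX₀ : ∫ ω, X ω ∂μ = 0) :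
    ∫ ω, X ω * Y ω ∂μ = 0 := by
  rw [hXY.integral_fun_mul_eq_mul_integral hX hY, hX₀, zero_mul]

lemma integral_mul_add_mul_star {a b S M₁ M₂ : Ω → 𝕜}
    (hind : (fun ω => (a ω, b ω)) ⟂ᵢ[μ] (fun ω => (S ω, M₁ ω, M₂ ω)))
    (ha : MemLp a ∞ μ) (hb : MemLp b ∞ μ) (ha₀ : ∫ ω, a ω ∂μ = 0) (hb₀ : ∫ ω, b ω ∂μ = 0)
    (hS : MemLp S 2 μ) (hM₁ : MemLp M₁ 2 μ) (hM₂ : MemLp M₂ 2 μ) :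
    ∫ ω, (a ω * S ω + M₁ ω) * star (b ω * S ω + M₂ ω) ∂μ
      = (∫ ω, a ω * star (b ω) ∂μ) * (∫ ω, S ω * star (S ω) ∂μ)
        + ∫ ω, M₁ ω * star (M₂ ω) ∂μ := by
  have hexpand : ∀ ω, (a ω * S ω + M₁ ω) * star (b ω * S ω + M₂ ω)
      = a ω * star (b ω) * (S ω * star (S ω)) + a ω * (S ω * star (M₂ ω))
        + star (b ω) * (M₁ ω * star (S ω)) + M₁ ω * star (M₂ ω) := fun ω => by
    simp only [star_add, star_mul']
    ring
  have hab : MemLp (fun ω => a ω * star (b ω)) ∞ μ := hb.star.mul' ha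
  have i₁ : Integrable (fun ω => a ω * star (b ω) * (S ω * star (S ω))) μ :=
    (hS.integrable_mul hS.star).mul_of_top_right hab
  have i₂ : Integrable (fun ω => a ω * (S ω * star (M₂ ω))) μ :=
    (hS.integrable_mul hM₂.star).mul_of_top_right ha
  have i₃ : Integrable (fun ω => star (b ω) * (M₁ ω * star (S ω))) μ :=
    (hM₁.integrable_mul hS.star).mul_of_top_right hb.star
  have i₄ : Integrable (fun ω => M₁ ω * star (M₂ ω)) μ := hM₁.integrable_mul hM₂.star
  have ind₁ : (fun ω => a ω * star (b ω)) ⟂ᵢ[μ] (fun ω => S ω * star (S ω)) :=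
    hind.comp (φ := fun x : 𝕜 × 𝕜 => x.1 * star x.2) (ψ := fun y : 𝕜 × 𝕜 × 𝕜 => y.1 * star y.1)
      (by fun_prop) (by fun_prop)
  have ind₂ : a ⟂ᵢ[μ] (fun ω => S ω * star (M₂ ω)) :=
    hind.comp (φ := fun x : 𝕜 × 𝕜 => x.1) (ψ := fun y : 𝕜 × 𝕜 × 𝕜 => y.1 * star y.2.2)
      (by fun_prop) (by fun_prop)
  have ind₃ : (fun ω => star (b ω)) ⟂ᵢ[μ] (fun ω => M₁ ω * star (S ω)) :=
    hind.comp (φ := fun x : 𝕜 × 𝕜 => star x.2) (ψ := fun y : 𝕜 × 𝕜 × 𝕜 => y.2.1 * star y.1)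
      (by fun_prop) (by fun_prop)
  rw [integral_congr_ae (ae_of_all _ hexpand), integral_add _ i₄, integral_add _ i₃,
    integral_add i₁ i₂, ind₁.integral_fun_mul_eq_mul_integral hab.1 (hS.1.mul hS.1.star),
    ind₂.integral_mul_eq_zero ha.1 (hS.1.mul hM₂.1.star) ha₀,
    ind₃.integral_mul_eq_zero hb.1.star (hM₁.1.mul hS.1.star) (integral_star_eq_zero hb₀),
    add_zero, add_zero]
  exacts [i₁.add i₂, (i₁.add i₂).add i₃]

lemma integral_sub_mul_star_sub {X Y Z : Ω → 𝕜}
    (hXZ : X ⟂ᵢ[μ] Z) (hYZ : Y ⟂ᵢ[μ] Z) (hX₀ : ∫ ω, X ω ∂μ = 0) (hY₀ : ∫ ω, Y ω ∂μ = 0)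
    (hX : MemLp X 2 μ) (hY : MemLp Y 2 μ) (hZ : MemLp Z 2 μ) :
    ∫ ω, (X ω - Z ω) * star (Y ω - Z ω) ∂μ
      = ∫ ω, X ω * star (Y ω) ∂μ + ∫ ω, Z ω * star (Z ω) ∂μ := by
  have hexpand : ∀ ω, (X ω - Z ω) * star (Y ω - Z ω)
      = X ω * star (Y ω) - X ω * star (Z ω) - star (Y ω) * Z ω + Z ω * star (Z ω) :=
    fun ω => by simp only [star_sub]; ring
  have i₁ : Integrable (fun ω => X ω * star (Y ω)) μ := hX.integrable_mul hY.star
  have i₂ : Integrable (fun ω => X ω * star (Z ω)) μ := hX.integrable_mul hZ.star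
  have i₃ : Integrable (fun ω => star (Y ω) * Z ω) μ := hY.star.integrable_mul hZ
  have i₄ : Integrable (fun ω => Z ω * star (Z ω)) μ := hZ.integrable_mul hZ.star
  have ind₂ : X ⟂ᵢ[μ] (fun ω => star (Z ω)) :=
    hXZ.comp (φ := id) (ψ := fun z : 𝕜 => star z) measurable_id (by fun_prop)
  have ind₃ : (fun ω => star (Y ω)) ⟂ᵢ[μ] Z :=
    hYZ.comp (φ := fun z : 𝕜 => star z) (ψ := id) (by fun_prop) measurable_id
  rw [integral_congr_ae (ae_of_all _ hexpand), integral_add _ i₄, integral_sub _ i₃,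
    integral_sub i₁ i₂, ind₂.integral_mul_eq_zero hX.1 hZ.1.star hX₀,
    ind₃.integral_mul_eq_zero hY.1.star hZ.1 (integral_star_eq_zero hY₀), sub_zero, sub_zero]
  exacts [i₁.sub i₂, (i₁.sub i₂).sub i₃]

lemma ProbabilityTheory.IndepFun.memLp_two_mul {X Y : Ω → 𝕜}
    (hXY : X ⟂ᵢ[μ] Y) (hX : MemLp X 2 μ) (hY : MemLp Y 2 μ) :
    MemLp (fun ω => X ω * Y ω) 2 μ := by
  refine (memLp_two_iff_integrable_sq_norm (hX.1.mul hY.1)).2 ?_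
  have hind : (fun ω => ‖X ω‖ ^ 2) ⟂ᵢ[μ] (fun ω => ‖Y ω‖ ^ 2) :=
    hXY.comp (φ := fun z : 𝕜 => ‖z‖ ^ 2) (ψ := fun z : 𝕜 => ‖z‖ ^ 2) (by fun_prop) (by fun_prop)
  simpa only [Pi.mul_def, norm_mul, mul_pow] using
    hind.integrable_mul (hX.integrable_norm_pow two_ne_zero) (hY.integrable_norm_pow two_ne_zero)

variable {ι : Type*} [Fintype ι]

noncomputable def secondMomentMatrix (μ : Measure Ω) (u : Ω → ι → 𝕜) : Matrix ι ι 𝕜 :=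
  Matrix.of fun i j => ∫ ω, u ω i * star (u ω j) ∂μ

variable {u v : Ω → ι → 𝕜}

lemma memLp_two_star_dotProduct (huv : u ⟂ᵢ[μ] v) (hu : ∀ i, MemLp (fun ω => u ω i) 2 μ)
    (hv : ∀ i, MemLp (fun ω => v ω i) 2 μ) :
    MemLp (fun ω => star (v ω) ⬝ᵥ u ω) 2 μ :=
  memLp_finsetSum _ fun i _ =>
    (huv.symm.comp (φ := fun y : ι → 𝕜 => star (y i)) (ψ := fun x : ι → 𝕜 => x i)
      (by fun_prop) (by fun_prop)).memLp_two_mul (hv i).star (hu i)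

lemma integral_star_dotProduct_mul_star (huv : u ⟂ᵢ[μ] v)
    (hu : ∀ i, MemLp (fun ω => u ω i) 2 μ) (hv : ∀ i, MemLp (fun ω => v ω i) 2 μ) :
    ∫ ω, (star (v ω) ⬝ᵥ u ω) * star (star (v ω) ⬝ᵥ u ω) ∂μ
      = (secondMomentMatrix μ v * secondMomentMatrix μ u).trace := by
  have hexpand : ∀ ω, (star (v ω) ⬝ᵥ u ω) * star (star (v ω) ⬝ᵥ u ω)
      = ∑ i, ∑ j, v ω j * star (v ω i) * (u ω i * star (u ω j)) := fun ω => by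
    simp only [dotProduct, Pi.star_apply, star_sum, star_mul', star_star, Finset.sum_mul_sum]
    exact Finset.sum_congr rfl fun i _ => Finset.sum_congr rfl fun j _ => by ring
  have hind : ∀ i j,
      (fun ω => v ω j * star (v ω i)) ⟂ᵢ[μ] (fun ω => u ω i * star (u ω j)) := fun i j =>
    huv.symm.comp (φ := fun y : ι → 𝕜 => y j * star (y i))
      (ψ := fun x : ι → 𝕜 => x i * star (x j)) (by fun_prop) (by fun_prop)
  have hterm : ∀ i j, ∫ ω, v ω j * star (v ω i) * (u ω i * star (u ω j)) ∂μ
      = secondMomentMatrix μ v j i * secondMomentMatrix μ u i j := fun i j =>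
    (hind i j).integral_fun_mul_eq_mul_integral ((hv j).1.mul (hv i).1.star)
      ((hu i).1.mul (hu j).1.star)
  have hint : ∀ i j, Integrable (fun ω => v ω j * star (v ω i) * (u ω i * star (u ω j))) μ :=
    fun i j => (hind i j).integrable_mul ((hv j).integrable_mul (hv i).star)
      ((hu i).integrable_mul (hu j).star)
  rw [integral_congr_ae (ae_of_all _ hexpand),
    integral_finsetSum _ fun i _ => integrable_finsetSum _ fun j _ => hint i j]
  simp only [integral_finsetSum _ fun j _ => hint _ j, hterm, Matrix.trace, Matrix.diag_apply,
    Matrix.mul_apply]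
  exact Finset.sum_comm

end SecondMoments

lemma indepFun_exp_I_mul_of_indepFun_phases {N : ℕ} {u v : Ω → Fin N → ℂ} {φ : Fin 2 → Ω → ℝ}
    {n : Fin 2 → Ω → ℂ} {nd : Ω → ℂ}
    (h : (fun ω => (φ 0 ω, φ 1 ω)) ⟂ᵢ[μ] (fun ω => (u ω, v ω, n 0 ω, n 1 ω, nd ω)))
    (p q : Fin 2) :
    (fun ω => (exp (I * φ p ω), exp (I * φ q ω))) ⟂ᵢ[μ]
      (fun ω => (star (v ω) ⬝ᵥ u ω, n p ω - nd ω, n q ω - nd ω)) := by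
  -- Repackaging phases and noises as `Fin 2`-indexed vectors lets `p` and `q` stay variables.
  have hvec : (fun ω p => φ p ω) ⟂ᵢ[μ] (fun ω => (u ω, v ω, fun p => n p ω, nd ω)) := by
    convert h.comp (φ := fun x : ℝ × ℝ => ![x.1, x.2])
      (ψ := fun w : (Fin N → ℂ) × (Fin N → ℂ) × ℂ × ℂ × ℂ =>
        (w.1, w.2.1, ![w.2.2.1, w.2.2.2.1], w.2.2.2.2)) (by fun_prop) (by fun_prop) using 1
    all_goals funext ω
    · ext p; fin_cases p <;> rfl
    · refine Prod.ext rfl (Prod.ext rfl (Prod.ext (funext fun p => ?_) rfl))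
      fin_cases p <;> rfl
  exact hvec.comp (φ := fun x : Fin 2 → ℝ => (exp (I * x p), exp (I * x q)))
    (ψ := fun w : (Fin N → ℂ) × (Fin N → ℂ) × (Fin 2 → ℂ) × ℂ =>
      (star w.2.1 ⬝ᵥ w.1, w.2.2.1 p - w.2.2.2, w.2.2.1 q - w.2.2.2)) (by fun_prop) (by fun_prop)

end

theorem correlation_consecutive_probings_EPS_direct_subtracted_general
    {Ω : Type*} [MeasurableSpace Ω] (μ : Measure Ω) [IsProbabilityMeasure μ]
    {N : ℕ}
    (u v : Ω → Fin N → ℂ)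
    (φ : Fin 2 → Ω → ℝ)
    (n : Fin 2 → Ω → ℂ) (nd : Ω → ℂ)
    (t : Fin 2 → Ω → ℂ)
    (ht : ∀ p ω, t p ω =
        star (v ω) ⬝ᵥ
            ((Complex.exp (Complex.I * (φ p ω : ℂ)) •
              (1 : Matrix (Fin N) (Fin N) ℂ)).mulVec (u ω))
        + (n p ω - nd ω))
    -- measurability
    (hum : Measurable u) (hvm : Measurable v)
    (hφm : ∀ p, Measurable (φ p)) (hnm : ∀ p, Measurable (n p)) (hndm : Measurable nd)
    -- the two phases are independent and uniform on (-π, π)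
    (hφindep : IndepFun (φ 0) (φ 1) μ)
    (hφunif : ∀ p, μ.map (φ p)
        = (ENNReal.ofReal (2 * π))⁻¹ • (volume.restrict (Set.Ioo (-π) π)))
    -- the pair of phases is independent of (u, v, n₁, n₂, n_d)
    (hφrest : IndepFun (fun ω => (φ 0 ω, φ 1 ω))
        (fun ω => (u ω, v ω, n 0 ω, n 1 ω, nd ω)) μ)
    -- (u, v, n₁, n₂, n_d) mutually independent: joint law = product of laws
    (hindep : μ.map (fun ω => (u ω, v ω, n 0 ω, n 1 ω, nd ω)) =
        (μ.map u).prod ((μ.map v).prod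
          ((μ.map (n 0)).prod ((μ.map (n 1)).prod (μ.map nd)))))
    -- square integrability
    (hnL2 : ∀ p, MemLp (n p) 2 μ) (hndL2 : MemLp nd 2 μ)
    (huL2 : ∀ i, MemLp (fun ω => u ω i) 2 μ)
    (hvL2 : ∀ i, MemLp (fun ω => v ω i) 2 μ)
    -- zero means
    (hnmean : ∀ p, ∫ ω, n p ω ∂μ = 0)
    -- second moments
    (σ2 σd2 : ℝ)
    (hσ : ∀ p, ∫ ω, n p ω * star (n p ω) ∂μ = (σ2 : ℂ))
    (hnuncorr : ∫ ω, n 0 ω * star (n 1 ω) ∂μ = 0)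
    (hσd : ∫ ω, nd ω * star (nd ω) ∂μ = (σd2 : ℂ))
    -- covariance matrices of the IRS channel vectors
    (Ru Rv : Matrix (Fin N) (Fin N) ℂ)
    (hRu : ∀ i j, Ru i j = ∫ ω, u ω i * star (u ω j) ∂μ)
    (hRv : ∀ i j, Rv i j = ∫ ω, v ω i * star (v ω j) ∂μ) :
    -- correlation coefficient
    ∀ l : Fin 2,
      (∫ ω, t 0 ω * star (t 1 ω) ∂μ) / (∫ ω, t l ω * star (t l ω) ∂μ)
        = (σd2 : ℂ) / ((Rv * Ru).trace + (σd2 : ℂ) + (σ2 : ℂ)) := by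
  intro l
  obtain rfl : Ru = secondMomentMatrix μ u := Matrix.ext hRu
  obtain rfl : Rv = secondMomentMatrix μ v := Matrix.ext hRv
  have hsample : ∀ p, t p = fun ω => exp (I * φ p ω) * (star (v ω) ⬝ᵥ u ω) + (n p ω - nd ω) :=
    fun p => funext fun ω => by
      simp only [ht, smul_mulVec, one_mulVec, dotProduct_smul, smul_eq_mul]
  obtain ⟨huv, hn₀, hn₁⟩ := indepFun_of_map_eq_prod₅ hum hvm (hnm 0) (hnm 1) hndm hindep
  have hnd : ∀ p, n p ⟂ᵢ[μ] nd := Fin.forall_fin_two.2 ⟨hn₀, hn₁⟩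
  have hmean : ∀ p, ∫ ω, exp (I * φ p ω) ∂μ = 0 := fun p =>
    integral_exp_I_mul_eq_zero_of_map_eq_uniform (hφm p).aemeasurable (hφunif p)
  have hcorr : ∀ p q, ∫ ω, t p ω * star (t q ω) ∂μ
      = (∫ ω, exp (I * φ p ω) * star (exp (I * φ q ω)) ∂μ)
          * (secondMomentMatrix μ v * secondMomentMatrix μ u).trace
        + (∫ ω, n p ω * star (n q ω) ∂μ + σd2) := fun p q => by
    rw [hsample, hsample,
      integral_mul_add_mul_star (indepFun_exp_I_mul_of_indepFun_phases hφrest p q)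
      (memLp_top_exp_I_mul (hφm p).aemeasurable) (memLp_top_exp_I_mul (hφm q).aemeasurable)
      (hmean p) (hmean q) (memLp_two_star_dotProduct huv huL2 hvL2) ((hnL2 p).sub hndL2)
      ((hnL2 q).sub hndL2), integral_star_dotProduct_mul_star huv huL2 hvL2,
      integral_sub_mul_star_sub (hnd p) (hnd q) (hnmean p) (hnmean q) (hnL2 p) (hnL2 q) hndL2,
      hσd]
  have hphase_uncorr : ∫ ω, exp (I * φ 0 ω) * star (exp (I * φ 1 ω)) ∂μ = 0 :=
    (hφindep.comp (φ := fun x : ℝ => exp (I * x)) (ψ := fun x : ℝ => star (exp (I * x)))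
      (by fun_prop) (by fun_prop)).integral_mul_eq_zero (by fun_prop) (by fun_prop) (hmean 0)
  have hphase_unit : ∫ ω, exp (I * φ l ω) * star (exp (I * φ l ω)) ∂μ = 1 := by
    simp only [exp_I_mul_ofReal_mul_star, integral_const, probReal_univ, one_smul]
  rw [hcorr, hcorr, hphase_uncorr, hphase_unit, hnuncorr, hσ l]
  congr 1 <;> ring

/-- **Lemma 3, EPS case** (correlation of consecutive probings under equal phase
shifts, direct path subtracted).  The samples are
`t p ω = (v ω)ᴴ ⬝ Φ p ω ⬝ u ω + (n p ω - n_d ω)` with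
`Φ p ω = exp (I * φ p ω) • 1`. -/
theorem correlation_consecutive_probings_EPS_direct_subtracted
    {Ω : Type*} [MeasurableSpace Ω] (μ : Measure Ω) [IsProbabilityMeasure μ]
    {N : ℕ} (hN : 1 ≤ N)
    (u v : Ω → Fin N → ℂ)
    (φ : Fin 2 → Ω → ℝ)
    (n : Fin 2 → Ω → ℂ) (nd : Ω → ℂ)
    (t : Fin 2 → Ω → ℂ)
    (ht : ∀ p ω, t p ω =
        star (v ω) ⬝ᵥ
            ((Complex.exp (Complex.I * (φ p ω : ℂ)) •
              (1 : Matrix (Fin N) (Fin N) ℂ)).mulVec (u ω))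
        + (n p ω - nd ω))
    -- measurability
    (hum : Measurable u) (hvm : Measurable v)
    (hφm : ∀ p, Measurable (φ p)) (hnm : ∀ p, Measurable (n p)) (hndm : Measurable nd)
    -- the two phases are independent and uniform on (-π, π)
    (hφindep : IndepFun (φ 0) (φ 1) μ)
    (hφunif : ∀ p, μ.map (φ p)
        = (ENNReal.ofReal (2 * π))⁻¹ • (volume.restrict (Set.Ioo (-π) π)))
    -- the pair of phases is independent of (u, v, n₁, n₂, n_d)
    (hφrest : IndepFun (fun ω => (φ 0 ω, φ 1 ω))
        (fun ω => (u ω, v ω, n 0 ω, n 1 ω, nd ω)) μ)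
    -- (u, v, n₁, n₂, n_d) mutually independent: joint law = product of laws
    (hindep : μ.map (fun ω => (u ω, v ω, n 0 ω, n 1 ω, nd ω)) =
        (μ.map u).prod ((μ.map v).prod
          ((μ.map (n 0)).prod ((μ.map (n 1)).prod (μ.map nd)))))
    -- square integrability
    (hnL2 : ∀ p, MemLp (n p) 2 μ) (hndL2 : MemLp nd 2 μ)
    (huL2 : ∀ i, MemLp (fun ω => u ω i) 2 μ)
    (hvL2 : ∀ i, MemLp (fun ω => v ω i) 2 μ)
    -- zero means
    (hnmean : ∀ p, ∫ ω, n p ω ∂μ = 0)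
    (hndmean : ∫ ω, nd ω ∂μ = 0)
    (humean : ∀ i, ∫ ω, u ω i ∂μ = 0)
    (hvmean : ∀ i, ∫ ω, v ω i ∂μ = 0)
    -- second moments
    (σ2 σd2 : ℝ)
    (hσ : ∀ p, ∫ ω, n p ω * star (n p ω) ∂μ = (σ2 : ℂ))
    (hnuncorr : ∫ ω, n 0 ω * star (n 1 ω) ∂μ = 0)
    (hσd : ∫ ω, nd ω * star (nd ω) ∂μ = (σd2 : ℂ))
    -- covariance matrices of the IRS channel vectors
    (Ru Rv : Matrix (Fin N) (Fin N) ℂ)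
    (hRu : ∀ i j, Ru i j = ∫ ω, u ω i * star (u ω j) ∂μ)
    (hRv : ∀ i j, Rv i j = ∫ ω, v ω i * star (v ω j) ∂μ) :
    -- correlation coefficient
    ∀ l : Fin 2,
      (∫ ω, t 0 ω * star (t 1 ω) ∂μ) / (∫ ω, t l ω * star (t l ω) ∂μ)
        = (σd2 : ℂ) / ((Rv * Ru).trace + (σd2 : ℂ) + (σ2 : ℂ)) :=
  correlation_consecutive_probings_EPS_direct_subtracted_general μ u v φ n nd t ht hum hvm hφm hnm
    hndm hφindep hφunif hφrest hindep hnL2 hndL2 huL2 hvL2 hnmean σ2 σd2 hσ hnuncorr hσd Ru Rv hRu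
    hRv
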